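/- Let Q be the quotient of G_sΔL by the normal closure of the three elements ℓ₁ℓ₂, ℓ₁ℓ∞, ℓ₂ℓ∞. Then Q is a nonabelian group of order 24, isomorphic to a semidirect product ℤ/3 ⋊ ℤ/8: the image of c₂·c₃⁻¹ generates a normal subgroup N of order 3, the image of c₂ generates a cyclic subgroup H of order 8, and Q = N ⋊ H. -/

import Mathlib

/-- Relations of `G_sΔL`; generators `c₁,c₂,c₃,c₄,ℓ₁,ℓ₂,ℓ∞` are `0,…,6`. -/
def GsdLrels : Set (FreeGroup (Fin 7)) :=
  let c₁ : FreeGroup (Fin 7) := FreeGroup.of 0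
  let c₂ : FreeGroup (Fin 7) := FreeGroup.of 1
  let c₃ : FreeGroup (Fin 7) := FreeGroup.of 2
  let c₄ : FreeGroup (Fin 7) := FreeGroup.of 3
  let l₁ : FreeGroup (Fin 7) := FreeGroup.of 4
  let l₂ : FreeGroup (Fin 7) := FreeGroup.of 5
  let li : FreeGroup (Fin 7) := FreeGroup.of 6
  { l₂ * c₁ * l₂⁻¹ * c₁⁻¹,
    l₂⁻¹ * c₂ * l₂ * ((c₂ * c₃ * c₄) * c₃ * (c₂ * c₃ * c₄)⁻¹)⁻¹,
    l₂⁻¹ * c₃ * l₂ * ((c₂ * c₃) * c₄ * (c₂ * c₃)⁻¹)⁻¹,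
    l₂⁻¹ * c₄ * l₂ * c₂⁻¹,
    l₁⁻¹ * c₁ * l₁ * ((c₁ * c₂) * c₃ * (c₁ * c₂)⁻¹)⁻¹,
    l₁⁻¹ * c₂ * l₁ * ((c₁ * c₂) * c₁ * (c₁ * c₂)⁻¹)⁻¹,
    l₁⁻¹ * c₃ * l₁ * (c₁ * c₂ * c₁⁻¹)⁻¹,
    l₁ * c₄ * l₁⁻¹ * c₄⁻¹,
    c₁ * c₂ * c₃ * c₄ * l₁ * l₂ * li,
    l₁ * l₂ * (l₂ * l₁)⁻¹ }

abbrev GsdL := PresentedGroup GsdLrels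

/-- The normal closure in `G_sΔL` of the three elements `ℓ₁ℓ₂`, `ℓ₁ℓ∞`, `ℓ₂ℓ∞`. -/
def Kexc : Subgroup GsdL :=
  Subgroup.normalClosure
    {PresentedGroup.of 4 * PresentedGroup.of 5,
     PresentedGroup.of 4 * PresentedGroup.of 6,
     PresentedGroup.of 5 * PresentedGroup.of 6}

instance : Kexc.Normal := Subgroup.normalClosure_normal

/-- The quotient of `G_sΔL` by the normal closure of `ℓ₁ℓ₂, ℓ₁ℓ∞, ℓ₂ℓ∞`. -/
abbrev Qgrp := GsdL ⧸ Kexc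

/-! ### A concrete model: `ℤ/3 ⋊ ℤ/8` -/

def eps (b : ZMod 8) : ZMod 3 := (-1) ^ b.val

lemma eps_add : ∀ b d : ZMod 8, eps (b + d) = eps b * eps d := by decide
lemma eps_zero : eps 0 = 1 := by decide
lemma eps_neg : ∀ b : ZMod 8, eps (-b) = eps b := by decide

def Cgrp := ZMod 3 × ZMod 8

instance : DecidableEq Cgrp := inferInstanceAs (DecidableEq (ZMod 3 × ZMod 8))
instance : Fintype Cgrp := inferInstanceAs (Fintype (ZMod 3 × ZMod 8))

instance : Mul Cgrp := ⟨fun p q => (p.1 + eps p.2 * q.1, p.2 + q.2)⟩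
instance : One Cgrp := ⟨((0 : ZMod 3), (0 : ZMod 8))⟩
instance : Inv Cgrp := ⟨fun p => (-(eps p.2 * p.1), -p.2)⟩

lemma Cgrp.mul_def (p q : Cgrp) : p * q = (p.1 + eps p.2 * q.1, p.2 + q.2) := rfl
lemma Cgrp.one_def : (1 : Cgrp) = ((0 : ZMod 3), (0 : ZMod 8)) := rfl
lemma Cgrp.inv_def (p : Cgrp) : p⁻¹ = (-(eps p.2 * p.1), -p.2) := rfl

instance : Group Cgrp where
  mul_assoc a b c := by
    refine Prod.ext_iff.2 ?_
    change a.1 + eps a.2 * b.1 + eps (a.2 + b.2) * c.1 = a.1 + eps a.2 * (b.1 + eps b.2 * c.1) ∧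
      a.2 + b.2 + c.2 = a.2 + (b.2 + c.2)
    simp only [Cgrp.mul_def, eps_add]
    constructor
    · ring
    · ring
  one_mul a := by
    refine Prod.ext_iff.2 ?_; change 0 + eps 0 * a.1 = a.1 ∧ 0 + a.2 = a.2; simp [Cgrp.mul_def, Cgrp.one_def, eps_zero]
  mul_one a := by
    refine Prod.ext_iff.2 ?_; change a.1 + eps a.2 * 0 = a.1 ∧ a.2 + 0 = a.2; simp [Cgrp.mul_def, Cgrp.one_def]
  inv_mul_cancel a := by
    refine Prod.ext_iff.2 ?_
    change -(eps a.2 * a.1) + eps (-a.2) * a.1 = 0 ∧ -a.2 + a.2 = 0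
    simp only [Cgrp.mul_def, Cgrp.inv_def, Cgrp.one_def, eps_neg]
    constructor
    · ring
    · ring

def aC : Cgrp := ((1 : ZMod 3), (1 : ZMod 8))
def xC : Cgrp := ((0 : ZMod 3), (1 : ZMod 8))
def tC : Cgrp := ((1 : ZMod 3), (0 : ZMod 8))
def cC : Cgrp := ((2 : ZMod 3), (1 : ZMod 8))
def lC : Cgrp := ((0 : ZMod 3), (4 : ZMod 8))

def fC : Fin 7 → Cgrp := ![aC, xC, cC, xC, lC, lC, lC]

lemma hrelsC : ∀ r ∈ GsdLrels, FreeGroup.lift fC r = 1 := by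
  intro r hr
  simp only [GsdLrels, Set.mem_insert_iff, Set.mem_singleton_iff] at hr
  rcases hr with rfl|rfl|rfl|rfl|rfl|rfl|rfl|rfl|rfl|rfl <;>
    · simp only [map_mul, map_inv, FreeGroup.lift_apply_of]
      decide

def phi0 : GsdL →* Cgrp := PresentedGroup.toGroup hrelsC

lemma hkerC : Kexc ≤ phi0.ker := by
  apply Subgroup.normalClosure_le_normal
  intro g hg
  simp only [Set.mem_insert_iff, Set.mem_singleton_iff] at hg
  rcases hg with rfl|rfl|rfl <;>
    · rw [SetLike.mem_coe, MonoidHom.mem_ker]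
      simp only [map_mul, phi0, PresentedGroup.toGroup.of]
      decide

def phi : Qgrp →* Cgrp := QuotientGroup.lift Kexc phi0 hkerC

/-! ### Generators of `Qgrp` -/

def piQ : FreeGroup (Fin 7) →* Qgrp :=
  (QuotientGroup.mk' Kexc).comp (PresentedGroup.mk GsdLrels)

lemma phi_piQ (g : FreeGroup (Fin 7)) : phi (piQ g) = FreeGroup.lift fC g := rfl

def Ag : Qgrp := piQ (FreeGroup.of 0)
def Xg : Qgrp := piQ (FreeGroup.of 1)
def Cg : Qgrp := piQ (FreeGroup.of 2)
def Dg : Qgrp := piQ (FreeGroup.of 3)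
def L1g : Qgrp := piQ (FreeGroup.of 4)
def L2g : Qgrp := piQ (FreeGroup.of 5)
def Lig : Qgrp := piQ (FreeGroup.of 6)

lemma relQ (r : FreeGroup (Fin 7)) (hr : r ∈ GsdLrels) : piQ r = 1 := by
  have h : PresentedGroup.mk GsdLrels r = 1 :=
    (QuotientGroup.eq_one_iff _).2 (Subgroup.subset_normalClosure hr)
  show (QuotientGroup.mk' Kexc) (PresentedGroup.mk GsdLrels r) = 1
  rw [h, map_one]

lemma kexcQ (g : GsdL)
    (hg : g ∈ ({PresentedGroup.of 4 * PresentedGroup.of 5,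
     PresentedGroup.of 4 * PresentedGroup.of 6,
     PresentedGroup.of 5 * PresentedGroup.of 6} : Set GsdL)) :
    (QuotientGroup.mk g : Qgrp) = 1 :=
  (QuotientGroup.eq_one_iff _).2 (Subgroup.subset_normalClosure hg)

/-! ### The defining relations, in `Qgrp` -/

section rels

private lemma mw (w : FreeGroup (Fin 7)) (h : w ∈ GsdLrels) : piQ w = 1 := relQ w h

lemma rel1 : L2g * Ag * L2g⁻¹ * Ag⁻¹ = 1 := by
  have h := relQ (FreeGroup.of 5 * FreeGroup.of 0 * (FreeGroup.of 5)⁻¹ * (FreeGroup.of 0)⁻¹)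
    (Set.mem_insert _ _)
  simp only [map_mul, map_inv] at h; exact h

lemma rel4 : L2g⁻¹ * Dg * L2g * Xg⁻¹ = 1 := by
  have h := relQ ((FreeGroup.of 5)⁻¹ * FreeGroup.of 3 * FreeGroup.of 5 * (FreeGroup.of 1)⁻¹)
    (Set.mem_insert_of_mem _ (Set.mem_insert_of_mem _ (Set.mem_insert_of_mem _
      (Set.mem_insert _ _))))
  simp only [map_mul, map_inv] at h; exact h

lemma rel5 : L1g⁻¹ * Ag * L1g *
    ((Ag * Xg) * Cg * (Ag * Xg)⁻¹)⁻¹ = 1 := by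
  have h := relQ ((FreeGroup.of 4)⁻¹ * FreeGroup.of 0 * FreeGroup.of 4 *
      ((FreeGroup.of 0 * FreeGroup.of 1) * FreeGroup.of 2 *
        (FreeGroup.of 0 * FreeGroup.of 1)⁻¹)⁻¹)
    (Set.mem_insert_of_mem _ (Set.mem_insert_of_mem _ (Set.mem_insert_of_mem _
      (Set.mem_insert_of_mem _ (Set.mem_insert _ _)))))
  simp only [map_mul, map_inv] at h; exact h

lemma rel6 : L1g⁻¹ * Xg * L1g *
    ((Ag * Xg) * Ag * (Ag * Xg)⁻¹)⁻¹ = 1 := by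
  have h := relQ ((FreeGroup.of 4)⁻¹ * FreeGroup.of 1 * FreeGroup.of 4 *
      ((FreeGroup.of 0 * FreeGroup.of 1) * FreeGroup.of 0 *
        (FreeGroup.of 0 * FreeGroup.of 1)⁻¹)⁻¹)
    (Set.mem_insert_of_mem _ (Set.mem_insert_of_mem _ (Set.mem_insert_of_mem _
      (Set.mem_insert_of_mem _ (Set.mem_insert_of_mem _ (Set.mem_insert _ _))))))
  simp only [map_mul, map_inv] at h; exact h

lemma rel7 : L1g⁻¹ * Cg * L1g * (Ag * Xg * Ag⁻¹)⁻¹ = 1 := by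
  have h := relQ ((FreeGroup.of 4)⁻¹ * FreeGroup.of 2 * FreeGroup.of 4 *
      (FreeGroup.of 0 * FreeGroup.of 1 * (FreeGroup.of 0)⁻¹)⁻¹)
    (Set.mem_insert_of_mem _ (Set.mem_insert_of_mem _ (Set.mem_insert_of_mem _
      (Set.mem_insert_of_mem _ (Set.mem_insert_of_mem _ (Set.mem_insert_of_mem _
        (Set.mem_insert _ _)))))))
  simp only [map_mul, map_inv] at h; exact h

lemma rel8 : L1g * Dg * L1g⁻¹ * Dg⁻¹ = 1 := by
  have h := relQ (FreeGroup.of 4 * FreeGroup.of 3 * (FreeGroup.of 4)⁻¹ * (FreeGroup.of 3)⁻¹)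
    (Set.mem_insert_of_mem _ (Set.mem_insert_of_mem _ (Set.mem_insert_of_mem _
      (Set.mem_insert_of_mem _ (Set.mem_insert_of_mem _ (Set.mem_insert_of_mem _
        (Set.mem_insert_of_mem _ (Set.mem_insert _ _))))))))
  simp only [map_mul, map_inv] at h; exact h

lemma rel9 : Ag * Xg * Cg * Dg * L1g * L2g * Lig = 1 := by
  have h := relQ (FreeGroup.of 0 * FreeGroup.of 1 * FreeGroup.of 2 * FreeGroup.of 3 *
      FreeGroup.of 4 * FreeGroup.of 5 * FreeGroup.of 6)
    (Set.mem_insert_of_mem _ (Set.mem_insert_of_mem _ (Set.mem_insert_of_mem _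
      (Set.mem_insert_of_mem _ (Set.mem_insert_of_mem _ (Set.mem_insert_of_mem _
        (Set.mem_insert_of_mem _ (Set.mem_insert_of_mem _ (Set.mem_insert _ _)))))))))
  simp only [map_mul, map_inv] at h; exact h

lemma k12 : L1g * L2g = 1 := by
  have h := kexcQ (PresentedGroup.of 4 * PresentedGroup.of 5) (Set.mem_insert _ _)
  simp only [QuotientGroup.mk_mul] at h; exact h

lemma k1i : L1g * Lig = 1 := by
  have h := kexcQ (PresentedGroup.of 4 * PresentedGroup.of 6)
    (Set.mem_insert_of_mem _ (Set.mem_insert _ _))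
  simp only [QuotientGroup.mk_mul] at h; exact h

lemma k2i : L2g * Lig = 1 := by
  have h := kexcQ (PresentedGroup.of 5 * PresentedGroup.of 6)
    (Set.mem_insert_of_mem _ (Set.mem_insert_of_mem _ (Set.mem_singleton _)))
  simp only [QuotientGroup.mk_mul] at h; exact h

end rels

/-! ### Consequences of the relations -/

lemma hL2 : L2g = L1g⁻¹ := eq_inv_of_mul_eq_one_right k12

lemma hLi : Lig = L1g⁻¹ := eq_inv_of_mul_eq_one_right k1i

lemma hL1L1 : L1g * L1g = 1 := by
  have h := k2i
  rw [hL2, hLi] at h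
  calc L1g * L1g = (L1g⁻¹ * L1g⁻¹)⁻¹ := by rw [mul_inv_rev, inv_inv]
    _ = (1 : Qgrp)⁻¹ := by rw [h]
    _ = 1 := inv_one

lemma hL1inv : L1g⁻¹ = L1g := by
  have := eq_inv_of_mul_eq_one_right hL1L1
  exact this.symm

lemma hD : Dg = Xg := by
  -- rel4 with hL2 : L1 * D * L1⁻¹ = X ; rel8 : L1 * D * L1⁻¹ = D
  have h4 := rel4
  rw [hL2] at h4
  -- h4 : (L1g⁻¹)⁻¹ * Dg * L1g⁻¹ * Xg⁻¹ = 1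
  have h8 := rel8
  calc Dg = (L1g * Dg * L1g⁻¹ * Dg⁻¹)⁻¹ * (L1g * Dg * L1g⁻¹) := by group
    _ = (1 : Qgrp)⁻¹ * (L1g * Dg * L1g⁻¹) := by rw [h8]
    _ = ((L1g⁻¹)⁻¹ * Dg * L1g⁻¹ * Xg⁻¹) * Xg := by group
    _ = 1 * Xg := by rw [h4]
    _ = Xg := by group

lemma hA1 : L1g⁻¹ * Ag * L1g = Ag := by
  have h1 := rel1
  rw [hL2] at h1
  -- h1 : L1g⁻¹ * Ag * (L1g⁻¹)⁻¹ * Ag⁻¹ = 1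
  calc L1g⁻¹ * Ag * L1g = (L1g⁻¹ * Ag * (L1g⁻¹)⁻¹ * Ag⁻¹) * Ag := by group
    _ = 1 * Ag := by rw [h1]
    _ = Ag := by group

lemma hC : Cg = Xg⁻¹ * Ag * Xg := by
  have h5 := rel5
  -- L1⁻¹ A L1 = (A X) C (A X)⁻¹  and L1⁻¹ A L1 = A
  have h : Ag = (Ag * Xg) * Cg * (Ag * Xg)⁻¹ := by
    calc Ag = L1g⁻¹ * Ag * L1g := hA1.symm
      _ = (L1g⁻¹ * Ag * L1g * ((Ag * Xg) * Cg * (Ag * Xg)⁻¹)⁻¹) *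
            ((Ag * Xg) * Cg * (Ag * Xg)⁻¹) := by group
      _ = 1 * ((Ag * Xg) * Cg * (Ag * Xg)⁻¹) := by rw [h5]
      _ = (Ag * Xg) * Cg * (Ag * Xg)⁻¹ := by group
  calc Cg = (Ag * Xg)⁻¹ * ((Ag * Xg) * Cg * (Ag * Xg)⁻¹) * (Ag * Xg) := by group
    _ = (Ag * Xg)⁻¹ * Ag * (Ag * Xg) := by rw [← h]
    _ = Xg⁻¹ * Ag * Xg := by group

lemma hL : L1g = Ag * Ag * Xg * Xg := by
  have h9 := rel9
  rw [hL2, hLi, hC, hD] at h9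
  -- h9 : Ag * Xg * (Xg⁻¹ * Ag * Xg) * Xg * L1g * L1g⁻¹ * L1g⁻¹ = 1
  have h : Ag * Ag * Xg * Xg =
      (Ag * Xg * (Xg⁻¹ * Ag * Xg) * Xg * L1g * L1g⁻¹ * L1g⁻¹) * L1g := by group
  rw [h9, one_mul] at h
  exact h.symm

lemma braid : Ag * Xg * Ag = Xg * Ag * Xg := by
  have h7 := rel7
  rw [hC, hL1inv, hL] at h7
  -- h7 : (A*A*X*X) * (X⁻¹*A*X) * (A*A*X*X) * (A*X*A⁻¹)⁻¹ = 1
  have huu : (Ag*Ag*Xg*Xg) * (Ag*Ag*Xg*Xg) = 1 := by rw [← hL]; exact hL1L1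
  have hu_inv : (Ag*Ag*Xg*Xg)⁻¹ = Ag*Ag*Xg*Xg := (eq_inv_of_mul_eq_one_right huu).symm
  have h7'' : (Ag*Ag*Xg*Xg) * (Xg⁻¹*Ag*Xg) * (Ag*Ag*Xg*Xg) = Ag*Xg*Ag⁻¹ := by
    calc (Ag*Ag*Xg*Xg) * (Xg⁻¹*Ag*Xg) * (Ag*Ag*Xg*Xg)
        = ((Ag*Ag*Xg*Xg) * (Xg⁻¹*Ag*Xg) * (Ag*Ag*Xg*Xg) * (Ag*Xg*Ag⁻¹)⁻¹) *
            (Ag*Xg*Ag⁻¹) := by group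
      _ = 1 * (Ag*Xg*Ag⁻¹) := by rw [h7]
      _ = Ag*Xg*Ag⁻¹ := one_mul _
  have h8 : (Ag*Ag*Xg*Xg) * (Xg⁻¹*Ag*Xg) = (Ag*Xg*Ag⁻¹) * (Ag*Ag*Xg*Xg) := by
    calc (Ag*Ag*Xg*Xg) * (Xg⁻¹*Ag*Xg)
        = ((Ag*Ag*Xg*Xg) * (Xg⁻¹*Ag*Xg) * (Ag*Ag*Xg*Xg)) * (Ag*Ag*Xg*Xg)⁻¹ := by group
      _ = (Ag*Xg*Ag⁻¹) * (Ag*Ag*Xg*Xg)⁻¹ := by rw [h7'']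
      _ = (Ag*Xg*Ag⁻¹) * (Ag*Ag*Xg*Xg) := by rw [hu_inv]
  calc Ag*Xg*Ag = Ag⁻¹ * ((Ag*Ag*Xg*Xg) * (Xg⁻¹*Ag*Xg)) * Xg⁻¹ := by group
    _ = Ag⁻¹ * ((Ag*Xg*Ag⁻¹) * (Ag*Ag*Xg*Xg)) * Xg⁻¹ := by rw [h8]
    _ = Xg*Ag*Xg := by group

lemma hE : Ag * Xg * Ag⁻¹ = Xg * Ag * Xg⁻¹ := by
  have h6 := rel6
  rw [hL1inv, hL] at h6
  -- h6 : (A*A*X*X) * Xg * (A*A*X*X) * ((A*X)*A*(A*X)⁻¹)⁻¹ = 1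
  have huu : (Ag*Ag*Xg*Xg) * (Ag*Ag*Xg*Xg) = 1 := by rw [← hL]; exact hL1L1
  have hu_inv : (Ag*Ag*Xg*Xg)⁻¹ = Ag*Ag*Xg*Xg := (eq_inv_of_mul_eq_one_right huu).symm
  have h6'' : (Ag*Ag*Xg*Xg) * Xg * (Ag*Ag*Xg*Xg) = (Ag*Xg)*Ag*(Ag*Xg)⁻¹ := by
    calc (Ag*Ag*Xg*Xg) * Xg * (Ag*Ag*Xg*Xg)
        = ((Ag*Ag*Xg*Xg) * Xg * (Ag*Ag*Xg*Xg) * ((Ag*Xg)*Ag*(Ag*Xg)⁻¹)⁻¹) *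
            ((Ag*Xg)*Ag*(Ag*Xg)⁻¹) := by group
      _ = 1 * ((Ag*Xg)*Ag*(Ag*Xg)⁻¹) := by rw [h6]
      _ = (Ag*Xg)*Ag*(Ag*Xg)⁻¹ := one_mul _
  have h6a : (Ag*Ag*Xg*Xg) * Xg * (Ag*Ag*Xg*Xg)⁻¹ = (Ag*Xg)*Ag*(Ag*Xg)⁻¹ := by
    rw [hu_inv]; exact h6''
  calc Ag*Xg*Ag⁻¹ = Ag⁻¹ * ((Ag*Ag*Xg*Xg) * Xg * (Ag*Ag*Xg*Xg)⁻¹) * Ag := by group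
    _ = Ag⁻¹ * ((Ag*Xg)*Ag*(Ag*Xg)⁻¹) * Ag := by rw [h6a]
    _ = Xg*Ag*Xg⁻¹ := by group

lemma hsq : Ag * Ag = Xg * Xg := by
  have h1 : Ag*Xg = (Ag*Xg)*(Ag*Xg⁻¹*Xg⁻¹*Ag) := by
    calc Ag*Xg = (Ag*Xg*Ag⁻¹)*Ag := by group
      _ = (Xg*Ag*Xg⁻¹)*Ag := by rw [hE]
      _ = (Xg*Ag*Xg)*(Xg⁻¹*Xg⁻¹*Ag) := by group
      _ = (Ag*Xg*Ag)*(Xg⁻¹*Xg⁻¹*Ag) := by rw [← braid]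
      _ = (Ag*Xg)*(Ag*Xg⁻¹*Xg⁻¹*Ag) := by group
  have h2 : (1:Qgrp) = Ag*Xg⁻¹*Xg⁻¹*Ag :=
    mul_left_cancel (a := Ag*Xg) (by rw [mul_one]; exact h1)
  have h3 : Xg*Xg = Ag*Ag := by
    calc Xg*Xg = Ag*(Ag*Xg⁻¹*Xg⁻¹*Ag)⁻¹*Ag := by group; exact (pow_two Xg).symm
      _ = Ag*((1:Qgrp))⁻¹*Ag := by rw [← h2]
      _ = Ag*Ag := by rw [inv_one, mul_one]
  exact h3.symm

/-! ### The elements `t` and `x` -/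

def tQ : Qgrp := QuotientGroup.mk (PresentedGroup.of 1 * (PresentedGroup.of 2)⁻¹)

lemma htQ : tQ = Ag⁻¹ * Xg := by
  have h : tQ = Xg * Cg⁻¹ := by
    show QuotientGroup.mk _ = _
    rw [QuotientGroup.mk_mul, QuotientGroup.mk_inv]; rfl
  rw [h, hC]; group

lemma hXA : Xg * Ag⁻¹ = Xg⁻¹ * Ag := by
  calc Xg*Ag⁻¹ = Xg⁻¹*(Xg*Xg)*Ag⁻¹ := by group
    _ = Xg⁻¹*(Ag*Ag)*Ag⁻¹ := by rw [← hsq]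
    _ = Xg⁻¹*Ag := by group

lemma hF1 : Ag*Xg⁻¹*Ag⁻¹ = Xg*Ag⁻¹*Xg⁻¹ := by
  calc Ag*Xg⁻¹*Ag⁻¹ = (Ag*Xg*Ag⁻¹)⁻¹ := by group
    _ = (Xg*Ag*Xg⁻¹)⁻¹ := by rw [hE]
    _ = Xg*Ag⁻¹*Xg⁻¹ := by group

lemma ht3 : tQ ^ (3:ℕ) = 1 := by
  rw [htQ]
  calc (Ag⁻¹*Xg)^(3:ℕ) = Ag⁻¹ * (Xg*Ag⁻¹) * (Xg*Ag⁻¹) * Xg := by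
        rw [show (3:ℕ) = 1+1+1 by norm_num, pow_add, pow_add, pow_one]; group
    _ = Ag⁻¹ * (Xg⁻¹*Ag) * (Xg⁻¹*Ag) * Xg := by rw [hXA]
    _ = Ag⁻¹*Xg⁻¹*(Ag*Xg⁻¹*Ag⁻¹)*(Ag*Ag)*Xg := by group
    _ = Ag⁻¹*Xg⁻¹*(Xg*Ag⁻¹*Xg⁻¹)*(Xg*Xg)*Xg := by rw [hF1, hsq]
    _ = (Ag*Ag)⁻¹*(Xg*Xg) := by group
    _ = (Xg*Xg)⁻¹*(Xg*Xg) := by rw [hsq]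
    _ = 1 := inv_mul_cancel _

lemma hxt : Xg * tQ * Xg⁻¹ = tQ⁻¹ := by
  rw [htQ]
  calc Xg*(Ag⁻¹*Xg)*Xg⁻¹ = Xg⁻¹*(Xg*Xg)*Ag⁻¹ := by group
    _ = Xg⁻¹*(Ag*Ag)*Ag⁻¹ := by rw [← hsq]
    _ = (Ag⁻¹*Xg)⁻¹ := by group

lemma hX8 : Xg ^ (8:ℕ) = 1 := by
  have h := hL1L1
  rw [hL, hsq] at h
  calc Xg^(8:ℕ) = (Xg*Xg*Xg*Xg)*(Xg*Xg*Xg*Xg) := by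
        rw [show (8:ℕ) = (1+1+1+1)+(1+1+1+1) by norm_num]
        simp only [pow_add, pow_one]
    _ = 1 := h

/-! ### Images under `phi` -/

lemma phiX : phi Xg = xC := by
  have h : phi Xg = FreeGroup.lift fC (FreeGroup.of 1) := rfl
  rw [h, FreeGroup.lift_apply_of]
  rfl

lemma phit : phi tQ = tC := by
  have h : phi tQ = FreeGroup.lift fC (FreeGroup.of 1 * (FreeGroup.of 2)⁻¹) := rfl
  rw [h, map_mul, map_inv, FreeGroup.lift_apply_of, FreeGroup.lift_apply_of]
  decide

lemma tQ_ne_one : tQ ≠ 1 := by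
  intro h
  have := phit
  rw [h, map_one] at this
  exact absurd this.symm (by decide)

lemma hX4 : Xg ^ (2^2 : ℕ) ≠ 1 := by
  intro h
  have h2 : phi (Xg ^ (4:ℕ)) = xC ^ (4:ℕ) := by rw [map_pow, phiX]
  norm_num at h
  rw [h, map_one] at h2
  exact absurd h2.symm (by decide)

instance : Fact (Nat.Prime 3) := ⟨by norm_num⟩

lemma ordert : orderOf tQ = 3 := orderOf_eq_prime ht3 tQ_ne_one

lemma orderx : orderOf Xg = 8 := by
  have h := orderOf_eq_prime_pow (p := 2) (n := 2) (x := Xg) hX4 (by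
    rw [show (2^(2+1) : ℕ) = 8 by norm_num]; exact hX8)
  rw [h]; norm_num

/-! ### Generation -/

lemma gen_top : ∀ g : Qgrp, ∃ i j : ℕ, g = tQ ^ i * Xg ^ j := by
  -- first: every generator is a word in tQ, Xg
  have hXgen : Xg = tQ ^ (0:ℕ) * Xg ^ (1:ℕ) := by group
  have hAg : Ag = Xg * tQ⁻¹ := by rw [htQ]; group
  have hCg2 : Cg = tQ⁻¹ * Xg := by rw [hC, htQ]; group
  have hL1g : L1g = (Xg*Xg*Xg*Xg) := by rw [hL, hsq]
  -- the subgroup closure of {tQ, Xg} is everything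
  have key : ∀ g : Qgrp, g ∈ Subgroup.closure {tQ, Xg} := by
    intro g
    have ht_mem : tQ ∈ Subgroup.closure {tQ, Xg} :=
      Subgroup.subset_closure (Set.mem_insert _ _)
    have hx_mem : Xg ∈ Subgroup.closure {tQ, Xg} :=
      Subgroup.subset_closure (Set.mem_insert_of_mem _ rfl)
    induction g using QuotientGroup.induction_on with
    | H z =>
      refine PresentedGroup.generated_by _
        ((Subgroup.closure {tQ, Xg}).comap (QuotientGroup.mk' Kexc)) ?_ z
      intro i
      rw [Subgroup.mem_comap]
      fin_cases i
      · show Ag ∈ _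
        rw [hAg]; exact mul_mem hx_mem (inv_mem ht_mem)
      · exact hx_mem
      · show Cg ∈ _
        rw [hCg2]; exact mul_mem (inv_mem ht_mem) hx_mem
      · show Dg ∈ _
        rw [hD]; exact hx_mem
      · show L1g ∈ _
        rw [hL1g]; exact mul_mem (mul_mem (mul_mem hx_mem hx_mem) hx_mem) hx_mem
      · show L2g ∈ _
        rw [hL2, hL1g]
        exact inv_mem (mul_mem (mul_mem (mul_mem hx_mem hx_mem) hx_mem) hx_mem)
      · show Lig ∈ _
        rw [hLi, hL1g]
        exact inv_mem (mul_mem (mul_mem (mul_mem hx_mem hx_mem) hx_mem) hx_mem)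
  -- commutation : move powers of X past powers of t
  have hxt1 : Xg * tQ = tQ^(2:ℕ) * Xg := by
    have h2 : tQ⁻¹ = tQ^(2:ℕ) := by
      calc tQ⁻¹ = tQ^(3:ℕ) * tQ⁻¹ := by rw [ht3, one_mul]
        _ = tQ^(2:ℕ) := by group
    calc Xg * tQ = (Xg * tQ * Xg⁻¹) * Xg := by group
      _ = tQ⁻¹ * Xg := by rw [hxt]
      _ = tQ^(2:ℕ) * Xg := by rw [h2]
  have hswap1 : ∀ k : ℕ, Xg * tQ^k = tQ^(2*k) * Xg := by
    intro k
    induction k with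
    | zero => simp
    | succ n ih =>
      calc Xg * tQ^(n+1) = (Xg * tQ^n) * tQ := by rw [pow_succ, mul_assoc]
        _ = tQ^(2*n) * (Xg * tQ) := by rw [ih]; group
        _ = tQ^(2*n) * (tQ^(2:ℕ) * Xg) := by rw [hxt1]
        _ = tQ^(2*(n+1)) * Xg := by rw [← mul_assoc, ← pow_add]; ring_nf
  have hswap : ∀ j k : ℕ, Xg^j * tQ^k = tQ^(2^j*k) * Xg^j := by
    intro j
    induction j with
    | zero => intro k; simp
    | succ n ih =>
      intro k
      calc Xg^(n+1) * tQ^k = Xg^n * (Xg * tQ^k) := by rw [pow_succ]; group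
        _ = Xg^n * (tQ^(2*k) * Xg) := by rw [hswap1]
        _ = (Xg^n * tQ^(2*k)) * Xg := by group
        _ = (tQ^(2^n*(2*k)) * Xg^n) * Xg := by rw [ih]
        _ = tQ^(2^(n+1)*k) * Xg^(n+1) := by rw [pow_succ (Xg)]; ring_nf; group
  -- closure induction
  intro g
  have hg := key g
  induction hg using Subgroup.closure_induction with
  | mem y hy =>
    rcases hy with rfl | hy
    · exact ⟨1, 0, by group⟩
    · rw [Set.mem_singleton_iff] at hy
      subst hy
      exact ⟨0, 1, by group⟩
  | one => exact ⟨0, 0, by group⟩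
  | mul y z _ _ hy hz =>
    obtain ⟨i, j, rfl⟩ := hy
    obtain ⟨k, l, rfl⟩ := hz
    refine ⟨i + 2^j*k, j + l, ?_⟩
    calc (tQ^i * Xg^j) * (tQ^k * Xg^l) = tQ^i * (Xg^j * tQ^k) * Xg^l := by group
      _ = tQ^i * (tQ^(2^j*k) * Xg^j) * Xg^l := by rw [hswap]
      _ = tQ^(i + 2^j*k) * Xg^(j+l) := by rw [pow_add, pow_add]; group
  | inv y _ hy =>
    obtain ⟨i, j, rfl⟩ := hy
    have hti : (tQ^i)⁻¹ = tQ^(2*i) := by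
      calc (tQ^i)⁻¹ = (tQ^(3*i)) * (tQ^i)⁻¹ := by
            rw [pow_mul, ht3, one_pow, one_mul]
        _ = tQ^(2*i) := by rw [show 3*i = 2*i + i by ring, pow_add]; group
    have hxj : (Xg^j)⁻¹ = Xg^(7*j) := by
      calc (Xg^j)⁻¹ = (Xg^(8*j)) * (Xg^j)⁻¹ := by
            rw [pow_mul, hX8, one_pow, one_mul]
        _ = Xg^(7*j) := by rw [show 8*j = 7*j + j by ring, pow_add]; group
    refine ⟨2^(7*j) * (2*i), 7*j, ?_⟩
    calc (tQ^i * Xg^j)⁻¹ = (Xg^j)⁻¹ * (tQ^i)⁻¹ := by group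
      _ = Xg^(7*j) * tQ^(2*i) := by rw [hti, hxj]
      _ = tQ^(2^(7*j)*(2*i)) * Xg^(7*j) := by rw [hswap]

/-! ### Cardinality -/

def Fsurj : Fin 3 × Fin 8 → Qgrp := fun p => tQ ^ (p.1 : ℕ) * Xg ^ (p.2 : ℕ)

lemma Fsurj_surj : Function.Surjective Fsurj := by
  intro g
  obtain ⟨i, j, rfl⟩ := gen_top g
  refine ⟨(⟨i % 3, Nat.mod_lt _ (by norm_num)⟩, ⟨j % 8, Nat.mod_lt _ (by norm_num)⟩), ?_⟩
  show tQ ^ (i % 3) * Xg ^ (j % 8) = tQ ^ i * Xg ^ j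
  rw [← ordert, pow_mod_orderOf, ← orderx, pow_mod_orderOf]

instance : Finite Qgrp := Finite.of_surjective Fsurj Fsurj_surj

lemma cardC : Nat.card Cgrp = 24 := by
  rw [Nat.card_eq_fintype_card]; decide

lemma phi_surj : Function.Surjective phi := by
  intro y
  obtain ⟨i, j, h⟩ :=
    (by decide : ∀ y : Cgrp, ∃ i : Fin 3, ∃ j : Fin 8, tC ^ (i:ℕ) * xC ^ (j:ℕ) = y) y
  exact ⟨tQ ^ (i:ℕ) * Xg ^ (j:ℕ), by rw [map_mul, map_pow, map_pow, phit, phiX]; exact h⟩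

lemma cardQ : Nat.card Qgrp = 24 := by
  have h1 : Nat.card Qgrp ≤ 24 := by
    have h := Nat.card_le_card_of_surjective Fsurj Fsurj_surj
    simpa using h
  have h2 : 24 ≤ Nat.card Qgrp := by
    have h := Nat.card_le_card_of_surjective phi phi_surj
    rwa [cardC] at h
  omega

/-! ### Normality of `zpowers tQ` -/

lemma hconj_z (k : ℤ) : Xg * tQ ^ k * Xg⁻¹ = tQ ^ (-k) := by
  calc Xg * tQ^k * Xg⁻¹ = (Xg * tQ * Xg⁻¹)^k := by rw [conj_zpow]
    _ = (tQ⁻¹)^k := by rw [hxt]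
    _ = tQ^(-k) := by rw [inv_zpow, zpow_neg]

lemma hconj_n : ∀ (j : ℕ) (k : ℤ), Xg^j * tQ^k * (Xg^j)⁻¹ = tQ^((-1)^j * k) := by
  intro j
  induction j with
  | zero => intro k; simp
  | succ n ih =>
    intro k
    calc Xg^(n+1) * tQ^k * (Xg^(n+1))⁻¹
        = Xg * (Xg^n * tQ^k * (Xg^n)⁻¹) * Xg⁻¹ := by rw [pow_succ']; group
      _ = Xg * tQ^((-1)^n * k) * Xg⁻¹ := by rw [ih]
      _ = tQ^(-((-1)^n * k)) := hconj_z _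
      _ = tQ^((-1)^(n+1) * k) := by rw [show -((-1)^n * k) = (-1)^(n+1) * k by ring]

lemma Nnormal : (Subgroup.zpowers tQ).Normal := by
  constructor
  intro n hn g
  obtain ⟨k, rfl⟩ := Subgroup.mem_zpowers_iff.1 hn
  obtain ⟨i, j, rfl⟩ := gen_top g
  have h : (tQ^i * Xg^j) * tQ^k * (tQ^i * Xg^j)⁻¹ = tQ^((i:ℤ) + (-1)^j * k - i) := by
    calc (tQ^i * Xg^j) * tQ^k * (tQ^i * Xg^j)⁻¹
        = tQ^i * (Xg^j * tQ^k * (Xg^j)⁻¹) * (tQ^i)⁻¹ := by group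
      _ = tQ^i * tQ^((-1)^j * k) * (tQ^i)⁻¹ := by rw [hconj_n]
      _ = tQ^((i:ℤ)) * tQ^((-1)^j*k) * (tQ^((i:ℤ)))⁻¹ := by rw [zpow_natCast]
      _ = tQ^((i:ℤ) + (-1)^j * k - i) := by rw [← zpow_add, ← zpow_sub]
  rw [h]
  exact Subgroup.zpow_mem_zpowers _ _

/-! ### Main theorem -/

theorem quotient_is_Z3_semidirect_Z8' :
    (¬ ∀ a b : Qgrp, a * b = b * a) ∧
    Nat.card Qgrp = 24 ∧
    (Subgroup.zpowers tQ).Normal ∧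
    Nat.card (Subgroup.zpowers tQ) = 3 ∧
    Nat.card (Subgroup.zpowers Xg) = 8 ∧
    (Subgroup.zpowers tQ) ⊓ (Subgroup.zpowers Xg) = ⊥ ∧
    (Subgroup.zpowers tQ) ⊔ (Subgroup.zpowers Xg) = ⊤ := by
  have cardN : Nat.card (Subgroup.zpowers tQ) = 3 := by rw [Nat.card_zpowers, ordert]
  have cardH : Nat.card (Subgroup.zpowers Xg) = 8 := by rw [Nat.card_zpowers, orderx]
  refine ⟨?_, cardQ, Nnormal, cardN, cardH, ?_, ?_⟩
  · intro hab
    have h := hab Xg tQ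
    have h2 := congrArg phi h
    rw [map_mul, map_mul, phiX, phit] at h2
    exact absurd h2 (by decide)
  · apply Subgroup.inf_eq_bot_of_coprime
    rw [cardN, cardH]
    norm_num
  · have h3 : (3:ℕ) ∣ Nat.card ↥(Subgroup.zpowers tQ ⊔ Subgroup.zpowers Xg) := by
      rw [← cardN]; exact Subgroup.card_dvd_of_le le_sup_left
    have h8 : (8:ℕ) ∣ Nat.card ↥(Subgroup.zpowers tQ ⊔ Subgroup.zpowers Xg) := by
      rw [← cardH]; exact Subgroup.card_dvd_of_le le_sup_right
    have h24 : (24:ℕ) ∣ Nat.card ↥(Subgroup.zpowers tQ ⊔ Subgroup.zpowers Xg) := by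
      have := Nat.Coprime.mul_dvd_of_dvd_of_dvd (by norm_num) h3 h8
      simpa using this
    have hle : Nat.card ↥(Subgroup.zpowers tQ ⊔ Subgroup.zpowers Xg) ∣ 24 := by
      rw [← cardQ]; exact Subgroup.card_subgroup_dvd_card _
    have hcard : Nat.card ↥(Subgroup.zpowers tQ ⊔ Subgroup.zpowers Xg) = 24 :=
      Nat.dvd_antisymm hle h24
    exact Subgroup.eq_top_of_card_eq _ (by rw [hcard, cardQ])

/-- The quotient is a nonabelian group of order 24, an internal semidirect product
`ℤ/3 ⋊ ℤ/8`, where the image of `c₂c₃⁻¹` generates the normal subgroup of order 3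
and the image of `c₂` generates a cyclic subgroup of order 8. -/
theorem quotient_is_Z3_semidirect_Z8 :
    (¬ ∀ a b : Qgrp, a * b = b * a) ∧
    Nat.card Qgrp = 24 ∧
    (Subgroup.zpowers
        (QuotientGroup.mk (PresentedGroup.of 1 * (PresentedGroup.of 2)⁻¹) : Qgrp)).Normal ∧
    Nat.card (Subgroup.zpowers
        (QuotientGroup.mk (PresentedGroup.of 1 * (PresentedGroup.of 2)⁻¹) : Qgrp)) = 3 ∧
    Nat.card (Subgroup.zpowers
        (QuotientGroup.mk (PresentedGroup.of 1) : Qgrp)) = 8 ∧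
    (Subgroup.zpowers
        (QuotientGroup.mk (PresentedGroup.of 1 * (PresentedGroup.of 2)⁻¹) : Qgrp)) ⊓
      (Subgroup.zpowers (QuotientGroup.mk (PresentedGroup.of 1) : Qgrp)) = ⊥ ∧
    (Subgroup.zpowers
        (QuotientGroup.mk (PresentedGroup.of 1 * (PresentedGroup.of 2)⁻¹) : Qgrp)) ⊔
      (Subgroup.zpowers (QuotientGroup.mk (PresentedGroup.of 1) : Qgrp)) = ⊤ := by
  have e1 : (QuotientGroup.mk (PresentedGroup.of 1 * (PresentedGroup.of 2)⁻¹) : Qgrp) = tQ := rfl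
  have e2 : (QuotientGroup.mk (PresentedGroup.of 1) : Qgrp) = Xg := rfl
  rw [e1, e2]
  exact quotient_is_Z3_semidirect_Z8'
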